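/- arXiv:1606.08383 — 4 statements merged into one kernel-verified Lean document; each statement's English description precedes it below -/
import Mathlib

section
/- Grassmann necklace property of minimal bases: for every a ∈ ℤ, regarding the a-minimal bases as k-element sets of residues modulo n, if a ∈ I→_a then I→_a \ {a} ⊆ I→_{a+1}, while if a ∉ I→_a then I→_a = I→_{a+1}. -/
/-!
The `a`-minimal basis is the greedy basis read off the window `a, a+1, …, a+n-1`: a column `j`
belongs to `I→_a` exactly when `A j` is not in the span of the columns `A a, …, A (j-1)`.
Indeed, an element of `I→_a` violating this could be exchanged for an earlier column, producing
a strictly `≼_a`-smaller basis; and the elements of `I→_a` together with any further greedy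
column would be linearly independent, which is impossible since `I→_a` already spans.
Passing from the window of `a` to that of `a+1` only shrinks these spans by `A a`, so the greedy
condition persists for `j ≠ a`; and when `a ∉ I→_a` the column `A a = A (a+n)` vanishes, so
the spans do not change at all.
-/

open scoped BigOperators

/-- The columns of `A` are `n`-periodic. -/
def ColPeriodic (k n : ℕ) (A : ℤ → Fin k → ℂ) : Prop :=
  ∀ a : ℤ, A (a + (n : ℤ)) = A a

/-- `A` has rank `k`, i.e. its columns span `ℂ^k`. -/
def FullRank (k : ℕ) (A : ℤ → Fin k → ℂ) : Prop :=
  Submodule.span ℂ (Set.range A) = ⊤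

/-- The Gale (componentwise) partial order on finite subsets of `ℤ` of equal
cardinality: `B ≼ C` iff they have the same cardinality and, for each `i`, the
`i`-th smallest element of `B` is at most the `i`-th smallest element of `C`
(equivalently, the counting condition below). -/
def galeLE (B C : Finset ℤ) : Prop :=
  B.card = C.card ∧
    ∀ t : ℤ, (B.filter fun x => t ≤ x).card ≤ (C.filter fun x => t ≤ x).card

/-- The columns of `A` indexed by `J` form a basis of `ℂ^k`. -/
def IsColBasis (k : ℕ) (A : ℤ → Fin k → ℂ) (J : Finset ℤ) : Prop :=
  J.card = k ∧ LinearIndependent ℂ (fun j : (J : Set ℤ) => A (j : ℤ)) ∧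
    Submodule.span ℂ (A '' (J : Set ℤ)) = ⊤

/-- `I` is the `≼_a`-minimal `k`-element subset of `{a, a+1, …, a+n-1}` whose
columns form a basis of `ℂ^k` (the `a`-minimal basis `I→_a`). -/
def IsMinBasis (k n : ℕ) (A : ℤ → Fin k → ℂ) (a : ℤ) (I : Finset ℤ) : Prop :=
  I ⊆ Finset.Ico a (a + (n : ℤ)) ∧ IsColBasis k A I ∧
    ∀ J : Finset ℤ, J ⊆ Finset.Ico a (a + (n : ℤ)) → IsColBasis k A J → galeLE I J

/-- `I` is the `≼_{a+1}`-maximal `k`-element subset of `{a-n+1, …, a}` whose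
columns form a basis of `ℂ^k` (the `a`-maximal basis `I←_a`).  Note that on
representatives in `{a-n+1, …, a}` the cyclic order `≺_{a+1}` agrees with the
usual order of `ℤ`. -/
def IsMaxBasis (k n : ℕ) (A : ℤ → Fin k → ℂ) (a : ℤ) (I : Finset ℤ) : Prop :=
  I ⊆ Finset.Ioc (a - (n : ℤ)) a ∧ IsColBasis k A I ∧
    ∀ J : Finset ℤ, J ⊆ Finset.Ioc (a - (n : ℤ)) a → IsColBasis k A J → galeLE J I

/-- The standard symmetric bilinear form `⟨x|y⟩ = ∑ i, x i * y i` on `ℂ^k`. -/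
noncomputable def bil (k : ℕ) (x y : Fin k → ℂ) : ℂ := ∑ i, x i * y i

/-- `π` is the bounded affine permutation of `A`:
`π a` is the least `r` with `a ≤ r ≤ a + n` and `A a ∈ span(A (a+1), …, A r)`. -/
def IsBAP (k n : ℕ) (A : ℤ → Fin k → ℂ) (π : ℤ → ℤ) : Prop :=
  ∀ a : ℤ,
    a ≤ π a ∧ π a ≤ a + (n : ℤ) ∧
    A a ∈ Submodule.span ℂ (A '' Set.Ioc a (π a)) ∧
    ∀ r : ℤ, a ≤ r → r ≤ a + (n : ℤ) →
      A a ∈ Submodule.span ℂ (A '' Set.Ioc a r) → π a ≤ r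

/-- `T` is the right twist `τ→(A)`: for each `a`, the column `T a` pairs to `1`
with `A a` and to `0` with the other columns of the `a`-minimal basis. -/
def IsRightTwist (k n : ℕ) (A T : ℤ → Fin k → ℂ) : Prop :=
  ∀ (a : ℤ) (I : Finset ℤ), IsMinBasis k n A a I →
    ∀ b ∈ I, bil k (T a) (A b) = if b = a then 1 else 0

/-- `T` is the left twist `τ←(A)`: for each `a`, the column `T a` pairs to `1`
with `A a` and to `0` with the other columns of the `a`-maximal basis. -/
def IsLeftTwist (k n : ℕ) (A T : ℤ → Fin k → ℂ) : Prop :=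
  ∀ (a : ℤ) (I : Finset ℤ), IsMaxBasis k n A a I →
    ∀ b ∈ I, bil k (T a) (A b) = if b = a then 1 else 0

/-- `Δ_I(A)`, where `I = {i 0 < i 1 < ⋯ < i (k-1)}` is given by a strictly
monotone enumeration `i : Fin k → ℤ`: the determinant of the `k×k` matrix with
columns `A (i 0), …, A (i (k-1))`. -/
noncomputable def Delta (k : ℕ) (A : ℤ → Fin k → ℂ) (i : Fin k → ℤ) : ℂ :=
  Matrix.det (Matrix.of fun r s : Fin k => A (i s) r)

open Submodule

theorem linearIndepOn_of_notMem_span_Iio {ι K V : Type*} [LinearOrder ι] [DivisionRing K]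
    [AddCommGroup V] [Module K V] {v : ι → V} (s : Finset ι)
    (hs : ∀ j ∈ s, v j ∉ span K (v '' {i | i ∈ s ∧ i < j})) :
    LinearIndepOn K v (s : Set ι) := by
  induction s using Finset.induction_on_max with
  | empty => simp
  | insert j s hlt ih =>
    have hj : j ∉ s := fun h => lt_irrefl j (hlt j h)
    rw [Finset.coe_insert, linearIndepOn_insert (by exact_mod_cast hj)]
    refine ⟨ih fun x hx hspan => hs x (Finset.mem_insert_of_mem hx) ?_, fun hspan => ?_⟩
    · exact span_mono (Set.image_mono (t := {i | i ∈ insert j s ∧ i < x})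
        fun i hi => ⟨Finset.mem_insert_of_mem hi.1, hi.2⟩) hspan
    · exact hs j (Finset.mem_insert_self j s) (span_mono (Set.image_mono (t := {i | i ∈ insert j s ∧ i < j})
        fun i hi => ⟨Finset.mem_insert_of_mem hi, hlt i hi⟩) hspan)

theorem not_galeLE_insert_erase_of_lt {I : Finset ℤ} {x y : ℤ} (hxy : x < y) (hy : y ∈ I) :
    ¬ galeLE I (insert x (I.erase y)) := by
  rintro ⟨-, hcount⟩
  have h := hcount (x + 1)
  rw [Finset.filter_insert, if_neg (by omega), Finset.filter_erase,
    Finset.card_erase_of_mem (Finset.mem_filter.2 ⟨hy, by omega⟩)] at h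
  have hpos : 0 < (I.filter fun z => x + 1 ≤ z).card :=
    Finset.card_pos.2 ⟨y, Finset.mem_filter.2 ⟨hy, by omega⟩⟩
  omega

section MinBasis

variable {k n : ℕ} {A : ℤ → Fin k → ℂ} {a : ℤ} {I : Finset ℤ}

theorem IsColBasis.of_linearIndepOn {J : Finset ℤ} (hcard : J.card = k)
    (hJ : LinearIndepOn ℂ A (J : Set ℤ)) : IsColBasis k A J := by
  refine ⟨hcard, hJ, ?_⟩
  rw [Set.image_eq_range]
  exact LinearIndependent.span_eq_top_of_card_eq_finrank' hJ (by simp [hcard])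

theorem IsMinBasis.notMem_span_Ico (hI : IsMinBasis k n A a I) {j : ℤ} (hj : j ∈ I) :
    A j ∉ span ℂ (A '' Set.Ico a j) := by
  obtain ⟨hwin, ⟨hcard, hindep, -⟩, hmin⟩ := hI
  intro hspan
  have hjI : j ∉ I.erase j := Finset.notMem_erase j I
  have herase : LinearIndepOn ℂ A ((I.erase j : Finset ℤ) : Set ℤ) ∧
      A j ∉ span ℂ (A '' ((I.erase j : Finset ℤ) : Set ℤ)) := by
    rw [← linearIndepOn_insert (by exact_mod_cast hjI), ← Finset.coe_insert,
      Finset.insert_erase hj]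
    exact hindep
  obtain ⟨i, hi, hiI⟩ :
      ∃ i ∈ Set.Ico a j, A i ∉ span ℂ (A '' ((I.erase j : Finset ℤ) : Set ℤ)) := by
    by_contra! hall
    exact herase.2 (span_le.2 (Set.image_subset_iff.2 hall) hspan)
  have hiI' : i ∉ I.erase j := fun h => hiI (subset_span ⟨i, h, rfl⟩)
  have hJ : IsColBasis k A (insert i (I.erase j)) := by
    refine .of_linearIndepOn ?_ ?_
    · rw [Finset.card_insert_of_notMem hiI', Finset.card_erase_of_mem hj,
        Nat.sub_add_cancel (hcard ▸ Finset.card_pos.2 ⟨j, hj⟩)]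
      exact hcard
    · rw [Finset.coe_insert, linearIndepOn_insert (by exact_mod_cast hiI')]
      exact ⟨herase.1, hiI⟩
  refine not_galeLE_insert_erase_of_lt hi.2 hj (hmin _ ?_ hJ)
  have hjwin := Finset.mem_Ico.1 (hwin hj)
  exact Finset.insert_subset (Finset.mem_Ico.2 ⟨hi.1, hi.2.trans hjwin.2⟩)
    ((Finset.erase_subset j I).trans hwin)

theorem IsMinBasis.mem_iff (hI : IsMinBasis k n A a I) {j : ℤ}
    (hj : j ∈ Finset.Ico a (a + n)) : j ∈ I ↔ A j ∉ span ℂ (A '' Set.Ico a j) := by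
  refine ⟨hI.notMem_span_Ico, fun hjspan => ?_⟩
  by_contra hjI
  have hge : ∀ x ∈ insert j I, a ≤ x := fun x hx => by
    rcases Finset.mem_insert.1 hx with rfl | hx
    · exact (Finset.mem_Ico.1 hj).1
    · exact (Finset.mem_Ico.1 (hI.1 hx)).1
  have hindep : LinearIndepOn ℂ A ((insert j I : Finset ℤ) : Set ℤ) := by
    refine linearIndepOn_of_notMem_span_Iio _ fun x hx hspan => ?_
    have hx' : A x ∉ span ℂ (A '' Set.Ico a x) := by
      rcases Finset.mem_insert.1 hx with rfl | hx
      · exact hjspan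
      · exact hI.notMem_span_Ico hx
    exact hx' (span_mono (Set.image_mono (t := Set.Ico a x)
      fun i hi => ⟨hge i hi.1, hi.2⟩) hspan)
  have hspanI : span ℂ (A '' I) = ⊤ := hI.2.1.2.2
  rw [Finset.coe_insert, linearIndepOn_insert (by exact_mod_cast hjI), hspanI] at hindep
  exact hindep.2 mem_top

theorem IsMinBasis.mem_succ_of_mem_of_ne (hI : IsMinBasis k n A a I) {I' : Finset ℤ}
    (hI' : IsMinBasis k n A (a + 1) I') {j : ℤ} (hj : j ∈ I) (hja : j ≠ a) : j ∈ I' := by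
  have hjwin := Finset.mem_Ico.1 (hI.1 hj)
  rw [hI'.mem_iff (Finset.mem_Ico.2 ⟨by omega, by omega⟩)]
  exact fun h => hI.notMem_span_Ico hj (span_mono (Set.image_mono (Set.Ico_subset_Ico_left
    (by omega))) h)

theorem IsMinBasis.mem_of_mem_succ_of_notMem (hper : ColPeriodic k n A)
    (hI : IsMinBasis k n A a I) {I' : Finset ℤ} (hI' : IsMinBasis k n A (a + 1) I') (ha : a ∉ I)
    {j : ℤ} (hj : j ∈ I') : j ∈ I := by
  have hjwin := Finset.mem_Ico.1 (hI'.1 hj)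
  have hAa : A a = 0 := by
    have h := (hI.mem_iff (Finset.mem_Ico.2 ⟨le_rfl, by omega⟩)).not.1 ha
    rwa [not_not, Set.Ico_self, Set.image_empty, span_empty, mem_bot] at h
  have hspan : span ℂ (A '' Set.Ico a j) = span ℂ (A '' Set.Ico (a + 1) j) := by
    rw [← Set.insert_Ico_add_one_left_eq_Ico (by omega), Set.image_insert_eq, hAa,
      span_insert_zero]
  have hjn : j ≠ a + n := by
    rintro rfl
    exact hI'.notMem_span_Ico hj (by rw [hper a, hAa]; exact zero_mem _)
  rw [hI.mem_iff (Finset.mem_Ico.2 ⟨by omega, by omega⟩), hspan]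
  exact hI'.notMem_span_Ico hj

end MinBasis

theorem grassmann_necklace_property_general
    (k n : ℕ)
    (A : ℤ → Fin k → ℂ) (hper : ColPeriodic k n A)
    (a : ℤ) (Ia Ia' : Finset ℤ)
    (hIa : IsMinBasis k n A a Ia) (hIa' : IsMinBasis k n A (a + 1) Ia') :
    (a ∈ Ia →
      (Ia.erase a).image (fun x : ℤ => (x : ZMod n)) ⊆
        Ia'.image (fun x : ℤ => (x : ZMod n))) ∧
    (a ∉ Ia →
      Ia.image (fun x : ℤ => (x : ZMod n)) =
        Ia'.image (fun x : ℤ => (x : ZMod n))) := by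
  refine ⟨fun _ => Finset.image_subset_image fun j hj => ?_, fun ha => ?_⟩
  · obtain ⟨hja, hjI⟩ := Finset.mem_erase.1 hj
    exact hIa.mem_succ_of_mem_of_ne hIa' hjI hja
  · suffices Ia = Ia' by rw [this]
    refine Finset.Subset.antisymm (fun j hj => ?_) fun j hj => ?_
    · exact hIa.mem_succ_of_mem_of_ne hIa' hj (by rintro rfl; exact ha hj)
    · exact hIa.mem_of_mem_succ_of_notMem hper hIa' ha hj

/-- Grassmann necklace property of minimal bases:
for every `a ∈ ℤ`, regarding the `a`-minimal bases as `k`-element sets of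
residues modulo `n`, if `a ∈ I→_a` then `I→_a \ {a} ⊆ I→_{a+1}`, while if
`a ∉ I→_a` then `I→_a = I→_{a+1}`. -/
theorem grassmann_necklace_property
    (k n : ℕ) (hk : 1 ≤ k) (hkn : k ≤ n)
    (A : ℤ → Fin k → ℂ) (hper : ColPeriodic k n A) (hrank : FullRank k A)
    (a : ℤ) (Ia Ia' : Finset ℤ)
    (hIa : IsMinBasis k n A a Ia) (hIa' : IsMinBasis k n A (a + 1) Ia') :
    (a ∈ Ia →
      (Ia.erase a).image (fun x : ℤ => (x : ZMod n)) ⊆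
        Ia'.image (fun x : ℤ => (x : ZMod n))) ∧
    (a ∉ Ia →
      Ia.image (fun x : ℤ => (x : ZMod n)) =
        Ia'.image (fun x : ℤ => (x : ZMod n))) :=
  grassmann_necklace_property_general k n A hper a Ia Ia' hIa hIa'
end

section
/- The span-minimal rule computes the bounded affine permutation of the Grassmann necklace: π satisfies π(a+n) = π(a)+n and a ≤ π(a) ≤ a+n for all a ∈ ℤ; moreover, for every a ∈ ℤ, if a ∈ I→_a then, as k-element sets of residues modulo n, I→_{a+1} = (I→_a \ {a}) ∪ {π(a)}, while if a ∉ I→_a then π(a) = a and I→_{a+1} = I→_a. -/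
open scoped BigOperators

/-!
The `≼_a`-minimal basis of the window `[a, a + n)` is the greedy one: `j` belongs to it iff
`A j` is not in the span of the earlier columns of the window. Indeed its initial segments have
maximal rank, which gives minimality by counting, and the Gale order is antisymmetric. Moving the
window to `[a + 1, a + n]` removes `A a` from these spans, and `A a ∈ span (A (a, j])` exactly
when `π a ≤ j`; the exchange lemma then shows that only `a` leaves and only `π a` enters.
-/

open Submodule Set Module

section Greedy

variable {K V : Type*} [DivisionRing K] [AddCommGroup V] [Module K V]

theorem mem_span_insert_iff_of_exchange {x y : V} {s : Set V}
    (h : x ∈ span K s ∨ x ∉ span K (insert y s)) :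
    y ∈ span K (insert x s) ↔ y ∈ span K s := by
  refine ⟨fun hy => ?_, fun hy => span_mono (subset_insert x s) hy⟩
  rcases h with hx | hx
  · rwa [span_insert_eq_span hx] at hy
  · by_contra hys
    exact hx (mem_span_insert_exchange hy hys)

theorem LinearIndepOn.finrank_span_image {ι : Type*} {v : ι → V} {J : Finset ι}
    (hJ : LinearIndepOn K v (J : Set ι)) : finrank K (span K (v '' J)) = J.card := by
  rw [Set.image_eq_range, finrank_span_eq_card hJ]
  simp

open scoped Classical in
variable (K) in
noncomputable def greedyBasis (v : ℤ → V) (a b : ℤ) : Finset ℤ :=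
  (Finset.Ico a b).filter fun j => v j ∉ span K (v '' Ico a j)

variable {v : ℤ → V} {a b j : ℤ}

theorem mem_greedyBasis :
    j ∈ greedyBasis K v a b ↔ (a ≤ j ∧ j < b) ∧ v j ∉ span K (v '' Ico a j) := by
  simp only [greedyBasis, Finset.mem_filter, Finset.mem_Ico]

theorem greedyBasis_subset : greedyBasis K v a b ⊆ Finset.Ico a b :=
  fun _ hj => Finset.mem_Ico.2 (mem_greedyBasis.1 hj).1

theorem greedyBasis_of_le (h : b ≤ a) : greedyBasis K v a b = ∅ := by
  simp [greedyBasis, Finset.Ico_eq_empty_of_le h]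

theorem self_mem_greedyBasis_iff : a ∈ greedyBasis K v a b ↔ a < b ∧ v a ≠ 0 := by
  simp [mem_greedyBasis]

theorem filter_lt_greedyBasis (t : ℤ) :
    (greedyBasis K v a b).filter (· < t) = greedyBasis K v a (min t b) := by
  ext j
  simp only [Finset.mem_filter, mem_greedyBasis, lt_min_iff]
  tauto

theorem greedyBasis_add_one_of_mem_span (h : v b ∈ span K (v '' Ico a b)) :
    greedyBasis K v a (b + 1) = greedyBasis K v a b := by
  ext j
  simp only [mem_greedyBasis]
  grind

theorem greedyBasis_add_one_of_notMem_span (hab : a ≤ b) (h : v b ∉ span K (v '' Ico a b)) :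
    greedyBasis K v a (b + 1) = insert b (greedyBasis K v a b) := by
  ext j
  simp only [Finset.mem_insert, mem_greedyBasis]
  grind

theorem span_greedyBasis : span K (v '' greedyBasis K v a b) = span K (v '' Ico a b) := by
  rcases lt_or_ge b a with hba | hab
  · rw [greedyBasis_of_le hba.le, Ico_eq_empty_of_le hba.le, Finset.coe_empty]
  induction b, hab using Int.leInduction with
  | base => rw [greedyBasis_of_le le_rfl, Ico_self, Finset.coe_empty]
  | succ b hab ih =>
    rw [← insert_Ico_right_eq_Ico_add_one hab, image_insert_eq]
    by_cases h : v b ∈ span K (v '' Ico a b)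
    · rw [greedyBasis_add_one_of_mem_span h, ih, span_insert_eq_span h]
    · rw [greedyBasis_add_one_of_notMem_span hab h, Finset.coe_insert, image_insert_eq,
        span_insert, span_insert, ih]

theorem linearIndepOn_greedyBasis : LinearIndepOn K v (greedyBasis K v a b : Set ℤ) := by
  rcases lt_or_ge b a with hba | hab
  · rw [greedyBasis_of_le hba.le, Finset.coe_empty]
    exact linearIndepOn_empty K v
  induction b, hab using Int.leInduction with
  | base => rw [greedyBasis_of_le le_rfl, Finset.coe_empty]; exact linearIndepOn_empty K v
  | succ b hab ih =>
    by_cases h : v b ∈ span K (v '' Ico a b)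
    · rwa [greedyBasis_add_one_of_mem_span h]
    · rw [greedyBasis_add_one_of_notMem_span hab h, Finset.coe_insert]
      exact ih.insert (by rwa [span_greedyBasis])

theorem card_le_card_greedyBasis {J : Finset ℤ} (hJ : J ⊆ Finset.Ico a b)
    (hind : LinearIndepOn K v (J : Set ℤ)) : J.card ≤ (greedyBasis K v a b).card := by
  have := FiniteDimensional.span_of_finite K ((Set.finite_Ico a b).image v)
  rw [← hind.finrank_span_image, ← linearIndepOn_greedyBasis.finrank_span_image,
    span_greedyBasis]
  exact Submodule.finrank_mono
    (span_mono (image_mono (by rw [← Finset.coe_Ico]; exact_mod_cast hJ)))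

theorem galeLE_of_card_filter_lt {B C : Finset ℤ} (hcard : B.card = C.card)
    (h : ∀ t, (C.filter (· < t)).card ≤ (B.filter (· < t)).card) : galeLE B C := by
  refine ⟨hcard, fun t => ?_⟩
  have hB := Finset.card_filter_add_card_filter_not (s := B) (p := fun x => t ≤ x)
  have hC := Finset.card_filter_add_card_filter_not (s := C) (p := fun x => t ≤ x)
  simp only [not_le] at hB hC
  have := h t
  omega

theorem card_filter_le_eq_card_filter_add_one_le (B : Finset ℤ) (x : ℤ) :
    (B.filter (x ≤ ·)).card = (B.filter (x + 1 ≤ ·)).card + if x ∈ B then 1 else 0 := by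
  split_ifs with hx
  · rw [← Finset.card_insert_of_notMem (s := B.filter (x + 1 ≤ ·)) (a := x) (by simp)]
    congr 1
    ext y
    simp only [Finset.mem_filter, Finset.mem_insert]
    grind
  · rw [add_zero]
    congr 1
    ext y
    simp only [Finset.mem_filter]
    grind

theorem galeLE_antisymm {B C : Finset ℤ} (hBC : galeLE B C) (hCB : galeLE C B) : B = C := by
  have heq : ∀ t, (B.filter (t ≤ ·)).card = (C.filter (t ≤ ·)).card :=
    fun t => (hBC.2 t).antisymm (hCB.2 t)
  ext x
  have hx := heq x
  rw [card_filter_le_eq_card_filter_add_one_le B x,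
    card_filter_le_eq_card_filter_add_one_le C x, heq (x + 1)] at hx
  by_cases hB : x ∈ B <;> by_cases hC : x ∈ C <;> simp_all

theorem galeLE_greedyBasis {J : Finset ℤ} (hJ : J ⊆ Finset.Ico a b)
    (hind : LinearIndepOn K v (J : Set ℤ)) (hcard : (greedyBasis K v a b).card = J.card) :
    galeLE (greedyBasis K v a b) J := by
  refine galeLE_of_card_filter_lt hcard fun t => ?_
  rw [filter_lt_greedyBasis]
  refine card_le_card_greedyBasis (fun x hx => ?_)
    (hind.mono (Finset.coe_subset.2 (Finset.filter_subset _ _)))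
  rw [Finset.mem_filter] at hx
  have := Finset.mem_Ico.1 (hJ hx.1)
  exact Finset.mem_Ico.2 ⟨this.1, lt_min hx.2 this.2⟩

end Greedy

section Necklace

variable {k n : ℕ} {A : ℤ → Fin k → ℂ} {π : ℤ → ℤ} {a j : ℤ}

theorem isColBasis_greedyBasis {b : ℤ} {I : Finset ℤ} (hI : IsColBasis k A I)
    (hIab : I ⊆ Finset.Ico a b) : IsColBasis k A (greedyBasis ℂ A a b) := by
  have hspan : span ℂ (A '' greedyBasis ℂ A a b) = ⊤ := by
    rw [span_greedyBasis, eq_top_iff, ← hI.2.2]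
    exact span_mono (image_mono (by rw [← Finset.coe_Ico]; exact_mod_cast hIab))
  refine ⟨?_, linearIndepOn_greedyBasis, hspan⟩
  rw [← linearIndepOn_greedyBasis.finrank_span_image, hspan, finrank_top, finrank_fin_fun]

theorem IsMinBasis.eq_greedyBasis {I : Finset ℤ} (h : IsMinBasis k n A a I) :
    I = greedyBasis ℂ A a (a + n) :=
  have hG := isColBasis_greedyBasis h.2.1 h.1
  galeLE_antisymm (h.2.2 _ greedyBasis_subset hG)
    (galeLE_greedyBasis h.1 h.2.1.2.1 (hG.1.trans h.2.1.1.symm))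

theorem IsBAP.le_iff (hπ : IsBAP k n A π) {r : ℤ} (h1 : a ≤ r) (h2 : r ≤ a + n) :
    π a ≤ r ↔ A a ∈ span ℂ (A '' Ioc a r) :=
  ⟨fun h => span_mono (image_mono (Ioc_subset_Ioc_right h)) (hπ a).2.2.1,
    (hπ a).2.2.2 r h1 h2⟩

theorem ColPeriodic.image_Ioc_add (hper : ColPeriodic k n A) (a r : ℤ) :
    A '' Ioc (a + n) (r + n) = A '' Ioc a r := by
  rw [← image_add_const_Ioc, image_image]
  exact image_congr fun x _ => hper x

theorem IsBAP.map_add_period (hper : ColPeriodic k n A) (hπ : IsBAP k n A π) (a : ℤ) :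
    π (a + n) = π a + n := by
  have hshift : ∀ r, a ≤ r → r ≤ a + n → (π (a + n) ≤ r + n ↔ π a ≤ r) := by
    intro r h1 h2
    rw [hπ.le_iff (by omega) (by omega), hper.image_Ioc_add, hper a, hπ.le_iff h1 h2]
  obtain ⟨h1, h2, -⟩ := hπ a
  obtain ⟨h1', h2', -⟩ := hπ (a + n)
  have hle := (hshift (π a) h1 h2).2 le_rfl
  have hge := (hshift (π (a + n) - n) (by omega) (by omega)).1 (by omega)
  omega

theorem IsBAP.self_mem_span_Ico_iff (hπ : IsBAP k n A π) (h1 : a + 1 ≤ j)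
    (h2 : j ≤ a + n + 1) :
    A a ∈ span ℂ (A '' Ico (a + 1) j) ↔ π a < j := by
  obtain ⟨r, rfl⟩ : ∃ r, j = r + 1 := ⟨j - 1, by ring⟩
  rw [Ico_add_one_add_one_eq_Ioc, ← hπ.le_iff (by omega) (by omega), Int.lt_add_one_iff]

theorem IsBAP.mem_span_Ico_add_one_iff_of_ne (hπ : IsBAP k n A π) (h1 : a + 1 ≤ j)
    (h2 : j ≤ a + n) (hj : j ≠ π a) :
    A j ∈ span ℂ (A '' Ico (a + 1) j) ↔ A j ∈ span ℂ (A '' Ico a j) := by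
  rw [← insert_Ico_add_one_left_eq_Ico (by omega : a < j), image_insert_eq]
  refine (mem_span_insert_iff_of_exchange ?_).symm
  rw [← image_insert_eq, insert_Ico_right_eq_Ico_add_one h1,
    hπ.self_mem_span_Ico_iff h1 (by omega), hπ.self_mem_span_Ico_iff (by omega) (by omega)]
  omega

theorem ColPeriodic.mem_span_Ico_add_period (hper : ColPeriodic k n A) (hn : a < a + n) :
    A (a + n) ∈ span ℂ (A '' Ico a (a + n)) := by
  rw [hper a]
  exact subset_span (mem_image_of_mem A ⟨le_rfl, hn⟩)

theorem IsBAP.greedyBasis_add_one_of_mem (hper : ColPeriodic k n A) (hπ : IsBAP k n A π)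
    (ha : a ∈ greedyBasis ℂ A a (a + n)) :
    greedyBasis ℂ A (a + 1) (a + 1 + n) =
      insert (π a) ((greedyBasis ℂ A a (a + n)).erase a) := by
  obtain ⟨hn, hA⟩ := self_mem_greedyBasis_iff.1 ha
  have hπa : a < π a := by
    by_contra! h
    have := (hπ.le_iff le_rfl (by omega)).1 h
    rw [Ioc_self, image_empty, span_empty, mem_bot] at this
    exact hA this
  have hπn := (hπ a).2.1
  ext j
  rw [Finset.mem_insert, Finset.mem_erase, mem_greedyBasis, mem_greedyBasis]
  by_cases hj : j = π a
  · rw [hj]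
    simp only [true_or, iff_true]
    refine ⟨⟨by omega, by omega⟩, fun hmem => ?_⟩
    have h1 := (hπ.self_mem_span_Ico_iff (a := a) (j := π a + 1) (by omega) (by omega)).2
      (by omega)
    rw [← insert_Ico_right_eq_Ico_add_one (by omega), image_insert_eq, span_insert_eq_span hmem,
      hπ.self_mem_span_Ico_iff (by omega) (by omega)] at h1
    exact lt_irrefl _ h1
  · simp only [hj, false_or]
    constructor
    · rintro ⟨⟨h1, h2⟩, h3⟩
      have hjn : j ≠ a + n := by
        rintro rfl
        exact h3 ((hπ.mem_span_Ico_add_one_iff_of_ne h1 le_rfl hj).2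
          (hper.mem_span_Ico_add_period hn))
      exact ⟨by omega, ⟨by omega, by omega⟩,
        by rwa [← hπ.mem_span_Ico_add_one_iff_of_ne h1 (by omega) hj]⟩
    · rintro ⟨h0, ⟨h1, h2⟩, h3⟩
      exact ⟨⟨by omega, by omega⟩,
        by rwa [hπ.mem_span_Ico_add_one_iff_of_ne (by omega) (by omega) hj]⟩

theorem greedyBasis_add_one_of_notMem (hper : ColPeriodic k n A)
    (ha : a ∉ greedyBasis ℂ A a (a + n)) :
    greedyBasis ℂ A (a + 1) (a + 1 + n) = greedyBasis ℂ A a (a + n) := by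
  have hA : 0 < n → A a = 0 := fun hn => by
    simpa [self_mem_greedyBasis_iff, hn] using ha
  have hspan : ∀ j, a < j → A a = 0 →
      (A j ∈ span ℂ (A '' Ico (a + 1) j) ↔ A j ∈ span ℂ (A '' Ico a j)) := by
    intro j h h0
    rw [← insert_Ico_add_one_left_eq_Ico h, image_insert_eq, h0, span_insert_zero]
  ext j
  rw [mem_greedyBasis, mem_greedyBasis]
  constructor
  · rintro ⟨⟨h1, h2⟩, h3⟩
    have hA0 := hA (by omega)
    have hjn : j ≠ a + n := by
      rintro rfl
      exact h3 (by rw [hper a, hA0]; exact zero_mem _)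
    exact ⟨⟨by omega, by omega⟩, by rwa [← hspan j (by omega) hA0]⟩
  · rintro ⟨⟨h1, h2⟩, h3⟩
    have hA0 := hA (by omega)
    have hja : j ≠ a := by
      rintro rfl
      exact h3 (by rw [hA0]; exact zero_mem _)
    exact ⟨⟨by omega, by omega⟩, by rwa [hspan j (by omega) hA0]⟩

theorem IsBAP.eq_self_of_notMem_greedyBasis (hπ : IsBAP k n A π)
    (ha : a ∉ greedyBasis ℂ A a (a + n)) : π a = a := by
  obtain ⟨h1, h2, -⟩ := hπ a
  rcases Nat.eq_zero_or_pos n with rfl | hn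
  · omega
  · have hA : A a = 0 := by simpa [self_mem_greedyBasis_iff, hn] using ha
    exact le_antisymm ((hπ.le_iff le_rfl (by omega)).2 (by rw [hA]; exact zero_mem _)) h1

end Necklace

theorem bap_of_necklace_general
    (k n : ℕ)
    (A : ℤ → Fin k → ℂ) (hper : ColPeriodic k n A)
    (π : ℤ → ℤ) (hπ : IsBAP k n A π) :
    (∀ a : ℤ, π (a + (n : ℤ)) = π a + (n : ℤ)) ∧
    (∀ a : ℤ, a ≤ π a ∧ π a ≤ a + (n : ℤ)) ∧
    (∀ (a : ℤ) (Ia Ia' : Finset ℤ),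
      IsMinBasis k n A a Ia → IsMinBasis k n A (a + 1) Ia' →
      (a ∈ Ia →
        Ia'.image (fun x : ℤ => (x : ZMod n)) =
          insert ((π a : ZMod n))
            ((Ia.erase a).image (fun x : ℤ => (x : ZMod n)))) ∧
      (a ∉ Ia → π a = a ∧
        Ia'.image (fun x : ℤ => (x : ZMod n)) =
          Ia.image (fun x : ℤ => (x : ZMod n)))) := by
  refine ⟨hπ.map_add_period hper, fun a => ⟨(hπ a).1, (hπ a).2.1⟩,
    fun a Ia Ia' hIa hIa' => ?_⟩
  rw [hIa.eq_greedyBasis, hIa'.eq_greedyBasis]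
  refine ⟨fun ha => ?_, fun ha => ⟨hπ.eq_self_of_notMem_greedyBasis ha, ?_⟩⟩
  · rw [hπ.greedyBasis_add_one_of_mem hper ha, Finset.image_insert]
  · rw [greedyBasis_add_one_of_notMem hper ha]

/-- the span-minimal rule computes the bounded affine
permutation of the Grassmann necklace: `π (a+n) = π a + n` and
`a ≤ π a ≤ a + n` for all `a`; moreover if `a ∈ I→_a` then, as sets of
residues mod `n`, `I→_{a+1} = (I→_a \ {a}) ∪ {π a}`, while if `a ∉ I→_a`
then `π a = a` and `I→_{a+1} = I→_a`. -/
theorem bap_of_necklace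
    (k n : ℕ) (hk : 1 ≤ k) (hkn : k ≤ n)
    (A : ℤ → Fin k → ℂ) (hper : ColPeriodic k n A) (hrank : FullRank k A)
    (π : ℤ → ℤ) (hπ : IsBAP k n A π) :
    (∀ a : ℤ, π (a + (n : ℤ)) = π a + (n : ℤ)) ∧
    (∀ a : ℤ, a ≤ π a ∧ π a ≤ a + (n : ℤ)) ∧
    (∀ (a : ℤ) (Ia Ia' : Finset ℤ),
      IsMinBasis k n A a Ia → IsMinBasis k n A (a + 1) Ia' →
      (a ∈ Ia →
        Ia'.image (fun x : ℤ => (x : ZMod n)) =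
          insert ((π a : ZMod n))
            ((Ia.erase a).image (fun x : ℤ => (x : ZMod n)))) ∧
      (a ∉ Ia → π a = a ∧
        Ia'.image (fun x : ℤ => (x : ZMod n)) =
          Ia.image (fun x : ℤ => (x : ZMod n)))) :=
  bap_of_necklace_general k n A hper π hπ
end

section
/- For every a ∈ ℤ, each of the two finite families of column vectors { A_{π(b)} : b ∈ ℤ, a ⇒_π b } and { A_b : b ∈ ℤ, a ⇒_π b } is linearly independent (every b with a ⇒_π b lies in the interval (a−n, a), so each family is finite). -/
open scoped BigOperators

section Aux

variable {k n : ℕ} {A : ℤ → Fin k → ℂ} {π : ℤ → ℤ}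

lemma bap_not_mem_span_pred (hπ : IsBAP k n A π) (b : ℤ) (hb : b < π b) :
    A b ∉ Submodule.span ℂ (A '' Set.Ioc b (π b - 1)) := by
  intro h
  have h2 := (hπ b).2.1
  have := (hπ b).2.2.2 (π b - 1) (by omega) (by omega) h
  omega

lemma ioc_insert (b r : ℤ) (h : b < r) :
    Set.Ioc b r = insert r (Set.Ioc b (r - 1)) := by
  ext x; simp only [Set.mem_Ioc, Set.mem_insert_iff]; omega

lemma bap_top_not_mem (hπ : IsBAP k n A π) (b : ℤ) (hb : b < π b) :
    A (π b) ∉ Submodule.span ℂ (A '' Set.Ioc b (π b - 1)) := by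
  intro h
  have hmem := (hπ b).2.2.1
  rw [ioc_insert b (π b) hb, Set.image_insert_eq,
    Submodule.span_insert_eq_span h] at hmem
  exact bap_not_mem_span_pred hπ b hb hmem

lemma bap_inj (hπ : IsBAP k n A π) {b c : ℤ} (hbc : b < c)
    (hc1 : c < π b) (hc2 : c < π c) (heq : π b = π c) : False := by
  have hcmem := (hπ c).2.2.1
  rw [← heq] at hcmem
  have hcnot : A c ∉ Submodule.span ℂ (A '' Set.Ioc c (π b - 1)) := by
    intro h
    have h2 := (hπ c).2.1
    have := (hπ c).2.2.2 (π b - 1) (by omega) (by omega) h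
    omega
  rw [ioc_insert c (π b) hc1, Set.image_insert_eq] at hcmem
  have hex := mem_span_insert_exchange hcmem hcnot
  have hr : A (π b) ∈ Submodule.span ℂ (A '' Set.Ioc b (π b - 1)) := by
    refine Submodule.span_le.2 ?_ hex
    intro x hx
    rcases hx with hx | hx
    · subst hx
      exact Submodule.subset_span ⟨c, ⟨hbc, by omega⟩, rfl⟩
    · rcases hx with ⟨y, hy, rfl⟩
      obtain ⟨hy1, hy2⟩ := hy
      exact Submodule.subset_span ⟨y, ⟨by omega, hy2⟩, rfl⟩
  exact bap_top_not_mem hπ b (by omega) hr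

lemma span_step (hπ : IsBAP k n A π) {a : ℤ} (t : Finset {b : ℤ // b < a ∧ a ≤ π a ∧ π a < π b})
    (g : {b : ℤ // b < a ∧ a ≤ π a ∧ π a < π b} → ℂ)
    (v : {b : ℤ // b < a ∧ a ≤ π a ∧ π a < π b} → Fin k → ℂ)
    (i0 : {b : ℤ // b < a ∧ a ≤ π a ∧ π a < π b}) (hi0 : i0 ∈ t)
    (hg : g i0 ≠ 0)
    (hsum : ∑ j ∈ t, g j • v j = 0)
    (S : Set (Fin k → ℂ))
    (hmem : ∀ j ∈ t.erase i0, v j ∈ S) :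
    v i0 ∈ Submodule.span ℂ S := by
  rw [← Finset.add_sum_erase t _ hi0] at hsum
  have hv : g i0 • v i0 = -∑ j ∈ t.erase i0, g j • v j := by
    linear_combination (norm := module) hsum
  rw [← Submodule.smul_mem_iff _ hg, hv]
  exact neg_mem (Submodule.sum_mem _ fun j hj =>
    Submodule.smul_mem _ _ (Submodule.subset_span (hmem j hj)))

end Aux

/-- for every `a`, each of the two families
`{A (π b) : a ⇒_π b}` and `{A b : a ⇒_π b}` is linearly independent
(every `b` with `a ⇒_π b` lies in the interval `(a-n, a)`, so each family is
finite).  Here `a ⇒_π b` means `b < a ≤ π a < π b`. -/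
theorem imp_families_linearIndependent
    (k n : ℕ) (hk : 1 ≤ k) (hkn : k ≤ n)
    (A : ℤ → Fin k → ℂ) (hper : ColPeriodic k n A) (hrank : FullRank k A)
    (π : ℤ → ℤ) (hπ : IsBAP k n A π) (a : ℤ) :
    (∀ b : ℤ, (b < a ∧ a ≤ π a ∧ π a < π b) → b ∈ Set.Ioo (a - (n : ℤ)) a) ∧
    LinearIndependent ℂ
      (fun b : {b : ℤ // b < a ∧ a ≤ π a ∧ π a < π b} => A (π (b : ℤ))) ∧
    LinearIndependent ℂ
      (fun b : {b : ℤ // b < a ∧ a ≤ π a ∧ π a < π b} => A (b : ℤ)) := by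
  constructor
  · intro b ⟨hb1, _, hb3⟩
    have h1 := (hπ b).2.1
    have h2 := (hπ a).1
    exact ⟨by omega, hb1⟩
  constructor
  · rw [linearIndependent_iff']
    intro s g hsum i hi
    by_contra hgi
    classical
    set t := s.filter (fun j => g j ≠ 0) with ht_def
    have hti : i ∈ t := Finset.mem_filter.2 ⟨hi, hgi⟩
    have htne : t.Nonempty := ⟨i, hti⟩
    have hsum' : ∑ j ∈ t, g j • A (π (j : ℤ)) = 0 := by
      rw [← hsum]
      exact Finset.sum_subset (Finset.filter_subset _ _)
        (fun x hx hxt => by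
          have : g x = 0 := by
            by_contra h; exact hxt (Finset.mem_filter.2 ⟨hx, h⟩)
          simp [this])
    obtain ⟨b, hbt, hbmax⟩ := t.exists_max_image (fun j => π (j : ℤ)) htne
    have hgb : g b ≠ 0 := (Finset.mem_filter.1 hbt).2
    obtain ⟨hb1, hb2, hb3⟩ := b.2
    have hmem : A (π (b : ℤ)) ∈
        Submodule.span ℂ (A '' Set.Ioc (b : ℤ) (π (b : ℤ) - 1)) := by
      refine span_step hπ t g _ b hbt hgb hsum' _ ?_
      intro j hj
      obtain ⟨hj1, hj2, hj3⟩ := j.2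
      have hjb : (j : ℤ) ≠ (b : ℤ) := fun h =>
        (Finset.ne_of_mem_erase hj) (Subtype.ext h)
      have hle : π (j : ℤ) ≤ π (b : ℤ) := hbmax j (Finset.mem_of_mem_erase hj)
      have hne : π (j : ℤ) ≠ π (b : ℤ) := by
        intro h
        rcases lt_or_gt_of_ne hjb with hlt | hlt
        · exact bap_inj hπ hlt (by omega) (by omega) h
        · exact bap_inj hπ hlt (by omega) (by omega) h.symm
      exact ⟨π (j : ℤ), ⟨by omega, by omega⟩, rfl⟩
    exact bap_top_not_mem hπ (b : ℤ) (by omega) hmem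
  · rw [linearIndependent_iff']
    intro s g hsum i hi
    by_contra hgi
    classical
    set t := s.filter (fun j => g j ≠ 0) with ht_def
    have hti : i ∈ t := Finset.mem_filter.2 ⟨hi, hgi⟩
    have htne : t.Nonempty := ⟨i, hti⟩
    have hsum' : ∑ j ∈ t, g j • A ((j : ℤ)) = 0 := by
      rw [← hsum]
      exact Finset.sum_subset (Finset.filter_subset _ _)
        (fun x hx hxt => by
          have : g x = 0 := by
            by_contra h; exact hxt (Finset.mem_filter.2 ⟨hx, h⟩)
          simp [this])
    obtain ⟨b, hbt, hbmin⟩ := t.exists_min_image (fun j => (j : ℤ)) htne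
    have hgb : g b ≠ 0 := (Finset.mem_filter.1 hbt).2
    obtain ⟨hb1, hb2, hb3⟩ := b.2
    have hmem : A ((b : ℤ)) ∈
        Submodule.span ℂ (A '' Set.Ioc (b : ℤ) (π (b : ℤ) - 1)) := by
      refine span_step hπ t g _ b hbt hgb hsum' _ ?_
      intro j hj
      obtain ⟨hj1, hj2, hj3⟩ := j.2
      have hjb : (j : ℤ) ≠ (b : ℤ) := fun h =>
        (Finset.ne_of_mem_erase hj) (Subtype.ext h)
      have hle : (b : ℤ) ≤ (j : ℤ) := hbmin j (Finset.mem_of_mem_erase hj)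
      exact ⟨(j : ℤ), ⟨by omega, by omega⟩, rfl⟩
    exact bap_not_mem_span_pred hπ (b : ℤ) (by omega) hmem
end

section
/- The left and right twists are mutually inverse: for every k×n complex matrix A of rank k, τ→(τ←(A)) = A and τ←(τ→(A)) = A. -/
open scoped BigOperators

/-!
The right twist is governed by the greedy bases of the windows. If `R = τ→(A)`, then `R b`
pairs to zero with `A m` whenever `b < m < b + n` and `A b ∉ span A(b, m]`. Hence on the
backward greedy basis `I` of the window `(a - n, a]` of `A`, the pairing matrix between the
columns of `R` and of `A` is unitriangular, so the columns of `R` indexed by `I` form a basis.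
Comparing with the forward greedy basis of `A` starting at `t`, whose columns beyond `a` are
orthogonal to the columns `R j` with `t ≤ j ≤ a`, a dimension count shows that `I` is also
the `a`-maximal basis of `R`. The relations defining `τ←(R)` at `a` are then solved by `A a`,
so `τ←(τ→(A)) = A`. Reversing the order of the columns exchanges left and right twists, which
gives the other identity.
-/

open Finset Submodule Module
open scoped Pointwise

section Greedy

variable {ι K V : Type*} [Field K] [AddCommGroup V] [Module K V]

theorem finrank_span_image_eq_card {v : ι → V} {s : Finset ι}
    (h : LinearIndepOn K v (s : Set ι)) : finrank K (span K (v '' s)) = #s := by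
  rw [Set.image_eq_range, finrank_span_eq_card h]
  simp

theorem LinearIndepOn.card_le_finrank_span {v : ι → V} {s t : Finset ι}
    (h : LinearIndepOn K v (s : Set ι)) (hst : s ⊆ t) : #s ≤ finrank K (span K (v '' t)) := by
  have : FiniteDimensional K (span K (v '' t)) :=
    FiniteDimensional.span_of_finite K (t.finite_toSet.image v)
  rw [← finrank_span_image_eq_card h]
  exact Submodule.finrank_mono (span_mono (Set.image_mono (coe_subset.2 hst)))

theorem span_image_eq_top_of_card_eq_finrank [FiniteDimensional K V] {v : ι → V} {s : Finset ι}
    (h : LinearIndepOn K v (s : Set ι)) (hcard : #s = finrank K V) : span K (v '' s) = ⊤ :=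
  eq_top_of_finrank_eq ((finrank_span_image_eq_card h).trans hcard)

variable [LinearOrder ι]

variable (K) in
open Classical in
noncomputable def greedy (v : ι → V) (s : Finset ι) : Finset ι :=
  {i ∈ s | v i ∉ span K (v '' ↑({j ∈ s | j < i} : Finset ι))}

variable {v : ι → V} {s t : Finset ι}

theorem mem_greedy {i : ι} :
    i ∈ greedy K v s ↔ i ∈ s ∧ v i ∉ span K (v '' ↑({j ∈ s | j < i} : Finset ι)) := by
  classical
  unfold greedy
  rw [mem_filter]

theorem greedy_subset : greedy K v s ⊆ s := fun _ hi => (mem_greedy.1 hi).1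

theorem greedy_filter {p : ι → Prop} [DecidablePred p]
    (hp : ∀ i ∈ s, ∀ j ∈ s, j < i → p i → p j) :
    greedy K v {i ∈ s | p i} = {i ∈ greedy K v s | p i} := by
  ext i
  simp only [mem_filter, mem_greedy]
  by_cases hi : i ∈ s ∧ p i
  · have hpre : {j ∈ {i ∈ s | p i} | j < i} = {j ∈ s | j < i} := by
      ext j
      simp only [mem_filter]
      exact ⟨fun h => ⟨h.1.1, h.2⟩, fun h => ⟨⟨h.1, hp i hi.1 j h.1 h.2 hi.2⟩, h.2⟩⟩
    rw [hpre]
    tauto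
  · tauto

theorem mem_greedy_insert_of_forall_lt {a i : ι} (ha : ∀ j ∈ s, j < a) :
    i ∈ greedy K v (insert a s) ↔ i ∈ greedy K v s ∨ i = a ∧ v a ∉ span K (v '' s) := by
  have hpre : {j ∈ insert a s | j < a} = s := by
    ext j
    simp only [mem_filter, mem_insert]
    constructor
    · rintro ⟨rfl | hj, hja⟩
      · exact absurd hja (lt_irrefl _)
      · exact hj
    · exact fun hj => ⟨Or.inr hj, ha j hj⟩
  have hlow : greedy K v s = {i ∈ greedy K v (insert a s) | i < a} := by
    rw [← greedy_filter fun i _ j _ hji hia => hji.trans hia, hpre]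
  rw [hlow, mem_filter]
  rcases lt_trichotomy i a with hi | rfl | hi
  · simp [hi, hi.ne]
  · simp [mem_greedy, hpre]
  · have : i ∉ insert a s := fun h => by
      rcases mem_insert.1 h with rfl | h
      exacts [lt_irrefl _ hi, lt_asymm hi (ha i h)]
    simpa [hi.ne', hi.not_gt] using fun h => this (greedy_subset h)

theorem span_greedy_and_linearIndepOn (s : Finset ι) :
    span K (v '' greedy K v s) = span K (v '' s) ∧ LinearIndepOn K v (greedy K v s : Set ι) := by
  induction s using Finset.induction_on_max with
  | empty => simp [greedy]
  | insert a s ha ih =>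
    by_cases h : v a ∈ span K (v '' s)
    · have heq : greedy K v (insert a s) = greedy K v s := by
        ext i; simp [mem_greedy_insert_of_forall_lt ha, h]
      rw [heq, coe_insert, Set.image_insert_eq, span_insert_eq_span h]
      exact ih
    · have heq : greedy K v (insert a s) = insert a (greedy K v s) := by
        ext i; simp [mem_greedy_insert_of_forall_lt ha, h, or_comm]
      rw [heq, coe_insert, coe_insert, Set.image_insert_eq, Set.image_insert_eq, span_insert,
        span_insert, ih.1]
      exact ⟨rfl, ih.2.insert (by rwa [ih.1])⟩

theorem span_greedy : span K (v '' greedy K v s) = span K (v '' s) :=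
  (span_greedy_and_linearIndepOn s).1

theorem linearIndepOn_greedy : LinearIndepOn K v (greedy K v s : Set ι) :=
  (span_greedy_and_linearIndepOn s).2

theorem card_greedy : #(greedy K v s) = finrank K (span K (v '' s)) := by
  rw [← span_greedy, finrank_span_image_eq_card linearIndepOn_greedy]

theorem span_filter_greedy {p : ι → Prop} [DecidablePred p]
    (hp : ∀ i ∈ s, ∀ j ∈ s, j < i → p i → p j) :
    span K (v '' ↑{i ∈ greedy K v s | p i}) = span K (v '' ↑({i ∈ s | p i} : Finset ι)) := by
  rw [← greedy_filter hp, span_greedy]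

theorem card_filter_greedy {p : ι → Prop} [DecidablePred p]
    (hp : ∀ i ∈ s, ∀ j ∈ s, j < i → p i → p j) :
    #{i ∈ greedy K v s | p i} = finrank K (span K (v '' ↑({i ∈ s | p i} : Finset ι))) := by
  rw [← greedy_filter hp, card_greedy]

theorem card_filter_le_card_filter_greedy {p : ι → Prop} [DecidablePred p]
    (hp : ∀ i ∈ s, ∀ j ∈ s, j < i → p i → p j) (hts : t ⊆ s)
    (ht : LinearIndepOn K v (t : Set ι)) : #{i ∈ t | p i} ≤ #{i ∈ greedy K v s | p i} := by
  rw [card_filter_greedy hp]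
  exact (ht.mono (coe_subset.2 (filter_subset _ _))).card_le_finrank_span
    (filter_subset_filter p hts)

end Greedy

section DotProduct

open Matrix

variable {ι κ K m : Type*} [Field K] [Fintype m]

theorem dotProduct_eq_zero_of_mem_span {x y : m → K} {v : ι → m → K} {s : Set ι}
    (h : ∀ i ∈ s, x ⬝ᵥ v i = 0) (hy : y ∈ span K (v '' s)) : x ⬝ᵥ y = 0 := by
  have : span K (v '' s) ≤ LinearMap.ker (dotProductBilin K K x) := span_le.2 <| by
    rintro _ ⟨i, hi, rfl⟩
    exact h i hi
  exact this hy

theorem eq_of_dotProduct_eq_of_span_eq_top {x y : m → K} {v : ι → m → K} {s : Set ι}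
    (hs : span K (v '' s) = ⊤) (h : ∀ i ∈ s, x ⬝ᵥ v i = y ⬝ᵥ v i) : x = y := by
  refine sub_eq_zero.1 (dotProduct_eq_zero _ fun w => ?_)
  exact dotProduct_eq_zero_of_mem_span (fun i hi => by rw [sub_dotProduct, h i hi, sub_self])
    (hs ▸ mem_top)

theorem card_add_card_le_of_dotProduct_eq_zero {v : ι → m → K} {u : κ → m → K}
    {s : Finset ι} {t : Finset κ} (hv : LinearIndepOn K v (s : Set ι))
    (hu : LinearIndepOn K u (t : Set κ)) (h : ∀ i ∈ s, ∀ j ∈ t, v i ⬝ᵥ u j = 0) :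
    #s + #t ≤ Fintype.card m := by
  let B : LinearMap.BilinForm K (m → K) := dotProductBilin K K
  have hB : B.Nondegenerate :=
    ⟨fun x hx => dotProduct_eq_zero x hx,
      fun y hy => dotProduct_eq_zero y fun x => dotProduct_comm y x ▸ hy x⟩
  have horth : span K (v '' s) ≤ B.orthogonal (span K (u '' t)) := by
    rw [span_le]
    rintro _ ⟨i, hi, rfl⟩
    refine LinearMap.BilinForm.mem_orthogonal_iff.2 fun y hy => ?_
    rw [dotProductBilin_apply_apply, dotProduct_comm]
    exact dotProduct_eq_zero_of_mem_span (h i hi) hy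
  have hle := Submodule.finrank_mono horth
  have htop := (span K (u '' t)).finrank_le
  rw [finrank_span_image_eq_card hv, LinearMap.BilinForm.finrank_orthogonal hB,
    finrank_span_image_eq_card hu, finrank_fintype_fun_eq_card] at hle
  rw [finrank_span_image_eq_card hu, finrank_fintype_fun_eq_card] at htop
  omega

end DotProduct

section Triangular

variable {ι K V : Type*} [LinearOrder ι] [Field K] [AddCommGroup V] [Module K V]

theorem linearIndepOn_of_dual_triangular {v : ι → V} {f : ι → Module.Dual K V} {s : Finset ι}
    (hlt : ∀ i ∈ s, ∀ j ∈ s, i < j → f j (v i) = 0) (hdiag : ∀ i ∈ s, f i (v i) ≠ 0) :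
    LinearIndepOn K v (s : Set ι) := by
  induction s using Finset.induction_on_max with
  | empty => simp
  | insert a s ha ih =>
    rw [coe_insert]
    refine (ih (fun i hi j hj => hlt i (mem_insert_of_mem hi) j (mem_insert_of_mem hj))
      (fun i hi => hdiag i (mem_insert_of_mem hi))).insert fun hmem => ?_
    have hker : span K (v '' s) ≤ LinearMap.ker (f a) := span_le.2 <| by
      rintro _ ⟨i, hi, rfl⟩
      exact hlt i (mem_insert_of_mem hi) a (mem_insert_self a s) (ha i hi)
    exact hdiag a (mem_insert_self a s) (hker hmem)

end Triangular

section Windows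

variable {k n : ℕ} {A : ℤ → Fin k → ℂ}

theorem image_comp_neg {V : Type*} (v : ℤ → V) (s : Finset ℤ) :
    (fun b => v (-b)) '' ↑s = v '' ↑(-s) := by
  rw [coe_neg, ← Set.image_neg_eq_neg, Set.image_image]

noncomputable def minBasis (n : ℕ) (A : ℤ → Fin k → ℂ) (a : ℤ) : Finset ℤ :=
  greedy ℂ A (Ico a (a + n))

noncomputable def maxBasis (n : ℕ) (A : ℤ → Fin k → ℂ) (a : ℤ) : Finset ℤ :=
  -minBasis n (fun b => A (-b)) (-a)

theorem mem_minBasis {a m : ℤ} :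
    m ∈ minBasis n A a ↔ m ∈ Ico a (a + n) ∧ A m ∉ span ℂ (A '' ↑(Ico a m)) := by
  rw [minBasis, mem_greedy, and_congr_right_iff, mem_Ico]
  intro hm
  have hpre : {j ∈ Ico a (a + n) | j < m} = Ico a m := by
    ext j; simp only [mem_filter, mem_Ico]; omega
  rw [hpre]

theorem mem_maxBasis {a i : ℤ} :
    i ∈ maxBasis n A a ↔ i ∈ Ioc (a - n) a ∧ A i ∉ span ℂ (A '' ↑(Ioc i a)) := by
  have hwin : -i ∈ Ico (-a) (-a + n) ↔ i ∈ Ioc (a - n) a := by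
    simp only [mem_Ico, mem_Ioc]; omega
  have hpre : -Ico (-a) (-i) = Ioc i a := by
    ext j; simp [mem_neg']; omega
  rw [maxBasis, mem_neg', mem_minBasis, image_comp_neg, neg_neg, hwin, hpre]

theorem card_filter_le_minBasis {a t : ℤ} (ht : t < a + n) :
    #{i ∈ minBasis n A a | i ≤ t} = finrank ℂ (span ℂ (A '' ↑(Icc a t))) := by
  have hpre : {j ∈ Ico a (a + n) | j ≤ t} = Icc a t := by
    ext j; simp only [mem_filter, mem_Ico, mem_Icc]; omega
  rw [minBasis, card_filter_greedy fun i _ j _ hji hit => hji.le.trans hit, hpre]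

theorem card_filter_ge_maxBasis {a t : ℤ} (ht : a - n < t) :
    #{i ∈ maxBasis n A a | t ≤ i} = finrank ℂ (span ℂ (A '' ↑(Icc t a))) := by
  have hneg : {i ∈ maxBasis n A a | t ≤ i} =
      -{i ∈ minBasis n (fun b => A (-b)) (-a) | i ≤ -t} := by
    ext i; simp [maxBasis, mem_neg']
  have hwin : -Icc (-a) (-t) = Icc t a := by
    ext j; simp [mem_neg']; omega
  rw [hneg, card_neg, card_filter_le_minBasis (by omega), image_comp_neg, hwin]

end Windows

section Reflection

variable {k n : ℕ} {A T : ℤ → Fin k → ℂ}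

theorem ColPeriodic.comp_neg (hper : ColPeriodic k n A) : ColPeriodic k n (fun b => A (-b)) :=
  fun a => by simpa only [neg_add] using Function.Periodic.neg hper (-a)

theorem FullRank.comp_neg (hrank : FullRank k A) : FullRank k (fun b => A (-b)) := by
  rwa [FullRank, ← Function.comp_def, neg_surjective.range_comp]

theorem isColBasis_comp_neg_iff {J : Finset ℤ} :
    IsColBasis k (fun b => A (-b)) J ↔ IsColBasis k A (-J) := by
  have hind : LinearIndepOn ℂ (fun b => A (-b)) (J : Set ℤ) ↔
      LinearIndepOn ℂ A ((-J : Finset ℤ) : Set ℤ) := by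
    rw [coe_neg, ← Set.image_neg_eq_neg]
    exact ⟨LinearIndepOn.image_of_comp _ _, fun h => h.comp_of_image neg_injective.injOn⟩
  rw [IsColBasis, IsColBasis, card_neg, image_comp_neg]
  exact and_congr_right' (and_congr_left' hind)

theorem galeLE_of_card_filter_lt_le {B C : Finset ℤ} (hcard : #B = #C)
    (h : ∀ t, #{x ∈ C | x < t} ≤ #{x ∈ B | x < t}) : galeLE B C := by
  refine ⟨hcard, fun t => ?_⟩
  have hB := card_filter_add_card_filter_not (s := B) (t ≤ ·)
  have hC := card_filter_add_card_filter_not (s := C) (t ≤ ·)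
  simp only [not_le] at hB hC
  have := h t
  omega

theorem galeLE.neg {B C : Finset ℤ} (h : galeLE B C) : galeLE (-C) (-B) := by
  refine galeLE_of_card_filter_lt_le (by rw [card_neg, card_neg, h.1]) fun t => ?_
  have hneg : ∀ S : Finset ℤ, {x ∈ -S | x < t} = -{x ∈ S | -t + 1 ≤ x} := fun S => by
    ext x; simp [mem_neg']
  rw [hneg, hneg, card_neg, card_neg]
  exact h.2 _

theorem galeLE_neg_iff {B C : Finset ℤ} : galeLE (-C) (-B) ↔ galeLE B C :=
  ⟨fun h => by simpa using h.neg, galeLE.neg⟩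

theorem isMinBasis_comp_neg_iff {a : ℤ} {I : Finset ℤ} :
    IsMinBasis k n (fun b => A (-b)) a I ↔ IsMaxBasis k n A (-a) (-I) := by
  have hwin : -Ico a (a + n) = Ioc (-a - n) (-a) := by
    ext x; simp [mem_neg']; omega
  have hsub : ∀ J : Finset ℤ, J ⊆ Ico a (a + n) ↔ -J ⊆ Ioc (-a - n) (-a) := fun J => by
    rw [← hwin]
    exact ⟨neg_subset_neg, fun h => by simpa using neg_subset_neg h⟩
  rw [IsMinBasis, IsMaxBasis, hsub, isColBasis_comp_neg_iff]
  refine and_congr_right' (and_congr_right' ((Equiv.neg (Finset ℤ)).forall_congr fun J => ?_))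
  rw [hsub, isColBasis_comp_neg_iff, Equiv.neg_apply, galeLE_neg_iff]

theorem isRightTwist_comp_neg_iff :
    IsRightTwist k n (fun b => A (-b)) (fun b => T (-b)) ↔ IsLeftTwist k n A T := by
  refine (Equiv.neg ℤ).forall_congr fun a => (Equiv.neg (Finset ℤ)).forall_congr fun I => ?_
  rw [Equiv.neg_apply, Equiv.neg_apply, isMinBasis_comp_neg_iff]
  refine imp_congr_right fun _ => (Equiv.neg ℤ).forall_congr fun b => ?_
  simp [mem_neg']

end Reflection

section Twists

open Matrix

variable {k n : ℕ} {A R : ℤ → Fin k → ℂ}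

theorem bil_eq_dotProduct (x y : Fin k → ℂ) : bil k x y = x ⬝ᵥ y := rfl

theorem isColBasis_of_linearIndepOn {J : Finset ℤ} (h : LinearIndepOn ℂ A (J : Set ℤ))
    (hcard : #J = k) : IsColBasis k A J :=
  ⟨hcard, h, span_image_eq_top_of_card_eq_finrank h (by simp [hcard])⟩

theorem ColPeriodic.span_image_Ico_eq_top (hper : ColPeriodic k n A) (hrank : FullRank k A)
    (hn : 0 < n) (a : ℤ) : span ℂ (A '' ↑(Ico a (a + n))) = ⊤ := by
  have hwin : (↑(Ico a (a + n)) : Set ℤ) = Set.Ioc (a - 1) (a - 1 + n) := by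
    ext; simp; omega
  rw [hwin, Function.Periodic.image_Ioc hper (by exact_mod_cast hn), hrank]

theorem linearIndepOn_minBasis {a : ℤ} : LinearIndepOn ℂ A (minBasis n A a : Set ℤ) :=
  linearIndepOn_greedy

theorem ColPeriodic.card_minBasis (hper : ColPeriodic k n A) (hrank : FullRank k A) (hn : 0 < n)
    (a : ℤ) : #(minBasis n A a) = k := by
  rw [minBasis, card_greedy, hper.span_image_Ico_eq_top hrank hn, finrank_top, finrank_fin_fun]

theorem ColPeriodic.isMinBasis_minBasis (hper : ColPeriodic k n A) (hrank : FullRank k A)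
    (hn : 0 < n) (a : ℤ) : IsMinBasis k n A a (minBasis n A a) := by
  refine ⟨greedy_subset, isColBasis_of_linearIndepOn linearIndepOn_minBasis
    (hper.card_minBasis hrank hn a), fun J hJ hJb => ?_⟩
  refine galeLE_of_card_filter_lt_le ((hper.card_minBasis hrank hn a).trans hJb.1.symm)
    fun t => ?_
  exact card_filter_le_card_filter_greedy (fun i _ j _ hji hit => hji.trans hit) hJ hJb.2.1

theorem self_mem_minBasis (hn : 0 < n) {b : ℤ} (hb : A b ≠ 0) : b ∈ minBasis n A b := by
  rw [mem_minBasis, Ico_self, coe_empty, Set.image_empty, span_empty, mem_bot, mem_Ico]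
  exact ⟨⟨le_rfl, by omega⟩, hb⟩

theorem span_filter_le_minBasis {a t : ℤ} (ht : t < a + n) :
    span ℂ (A '' ↑{i ∈ minBasis n A a | i ≤ t}) = span ℂ (A '' ↑(Icc a t)) := by
  have hpre : {j ∈ Ico a (a + n) | j ≤ t} = Icc a t := by
    ext j; simp only [mem_filter, mem_Ico, mem_Icc]; omega
  rw [minBasis, span_filter_greedy fun i _ j _ hji hit => hji.le.trans hit, hpre]

theorem IsRightTwist.dotProduct_of_mem_minBasis (hR : IsRightTwist k n A R)
    (hper : ColPeriodic k n A) (hrank : FullRank k A) (hn : 0 < n) {b m : ℤ}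
    (hm : m ∈ minBasis n A b) : R b ⬝ᵥ A m = if m = b then 1 else 0 :=
  hR b _ (hper.isMinBasis_minBasis hrank hn b) m hm

theorem IsRightTwist.dotProduct_self (hR : IsRightTwist k n A R)
    (hper : ColPeriodic k n A) (hrank : FullRank k A) (hn : 0 < n) {b : ℤ} (hb : A b ≠ 0) :
    R b ⬝ᵥ A b = 1 := by
  simpa using hR.dotProduct_of_mem_minBasis hper hrank hn (self_mem_minBasis hn hb)

theorem IsRightTwist.dotProduct_eq_zero (hR : IsRightTwist k n A R)
    (hper : ColPeriodic k n A) (hrank : FullRank k A) (hn : 0 < n) {b m : ℤ}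
    (hbm : b < m) (hmb : m < b + n) (hspan : A b ∉ span ℂ (A '' ↑(Ioc b m))) :
    R b ⬝ᵥ A m = 0 := by
  classical
  set G := {i ∈ minBasis n A b | i ≤ m}
  have hb : b ∈ G := mem_filter.2
    ⟨self_mem_minBasis hn fun h => hspan (h ▸ zero_mem _), hbm.le⟩
  have hGb : G.erase b ⊆ Ioc b m := fun i hi => by
    obtain ⟨hib, hiG⟩ := mem_erase.1 hi
    obtain ⟨hi, him⟩ := mem_filter.1 hiG
    have := (mem_Ico.1 (mem_minBasis.1 hi).1).1
    exact mem_Ioc.2 ⟨lt_of_le_of_ne this (Ne.symm hib), him⟩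
  have hAm : A m ∈ span ℂ (A '' ↑G) := by
    rw [span_filter_le_minBasis hmb]
    exact subset_span ⟨m, by simp [hbm.le], rfl⟩
  -- `A m = c • A b + z` with `z` spanned by columns that `R b` annihilates, and `c ≠ 0` would
  -- put `A b` into `span A(b, m]`.
  rw [← insert_erase hb, coe_insert, Set.image_insert_eq, mem_span_insert] at hAm
  obtain ⟨c, z, hz, hAm⟩ := hAm
  have hc : c = 0 := by
    by_contra hc
    refine hspan ?_
    have : A b = c⁻¹ • (A m - z) := by rw [hAm, add_sub_cancel_right, inv_smul_smul₀ hc]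
    rw [this]
    exact smul_mem _ _ (sub_mem (subset_span ⟨m, by simp [hbm], rfl⟩)
      (span_mono (Set.image_mono (coe_subset.2 hGb)) hz))
  rw [hAm, hc, zero_smul, zero_add]
  refine dotProduct_eq_zero_of_mem_span (fun i hi => ?_) hz
  obtain ⟨hib, hiG⟩ := mem_erase.1 hi
  rw [hR.dotProduct_of_mem_minBasis hper hrank hn (mem_filter.1 hiG).1, if_neg hib]

theorem ColPeriodic.card_maxBasis (hper : ColPeriodic k n A) (hrank : FullRank k A) (hn : 0 < n)
    (a : ℤ) : #(maxBasis n A a) = k := by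
  rw [maxBasis, card_neg, hper.comp_neg.card_minBasis hrank.comp_neg hn]

theorem IsRightTwist.linearIndepOn_maxBasis (hR : IsRightTwist k n A R)
    (hper : ColPeriodic k n A) (hrank : FullRank k A) (hn : 0 < n) (a : ℤ) :
    LinearIndepOn ℂ R (maxBasis n A a : Set ℤ) := by
  refine linearIndepOn_of_dual_triangular (f := fun j => dotProductBilin ℂ ℂ (A j))
    (fun i hi j hj hij => ?_) (fun i hi => ?_)
  · obtain ⟨hiw, hispan⟩ := mem_maxBasis.1 hi
    have hjw := (mem_maxBasis.1 hj).1
    rw [mem_Ioc] at hiw hjw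
    rw [dotProductBilin_apply_apply, dotProduct_comm]
    exact hR.dotProduct_eq_zero hper hrank hn hij (by omega)
      fun h => hispan (span_mono (Set.image_mono (coe_subset.2 (Ioc_subset_Ioc_right hjw.2))) h)
  · have hAi : A i ≠ 0 := fun h => (mem_maxBasis.1 hi).2 (h ▸ zero_mem _)
    rw [dotProductBilin_apply_apply, dotProduct_comm, hR.dotProduct_self hper hrank hn hAi]
    exact one_ne_zero

theorem IsRightTwist.card_filter_ge_le_card_filter_maxBasis (hR : IsRightTwist k n A R)
    (hper : ColPeriodic k n A) (hrank : FullRank k A) (hn : 0 < n) {a t : ℤ} (ht : a - n < t)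
    {J : Finset ℤ} (hJ : J ⊆ Ioc (a - n) a) (hJind : LinearIndepOn ℂ R (J : Set ℤ)) :
    #{j ∈ J | t ≤ j} ≤ #{i ∈ maxBasis n A a | t ≤ i} := by
  -- The columns of `I→_t(A)` beyond `a` are orthogonal to the `R j` with `t ≤ j ≤ a`, and
  -- there are `k - dim span A[t, a]` of them.
  have horth : ∀ j ∈ {j ∈ J | t ≤ j}, ∀ m ∈ {m ∈ minBasis n A t | a < m}, R j ⬝ᵥ A m = 0 := by
    intro j hj m hm
    obtain ⟨hjJ, htj⟩ := mem_filter.1 hj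
    obtain ⟨hmt, ham⟩ := mem_filter.1 hm
    have hja := (mem_Ioc.1 (hJ hjJ)).2
    obtain ⟨hmw, hmspan⟩ := mem_minBasis.1 hmt
    rw [mem_Ico] at hmw
    have hmj : m ∈ minBasis n A j := mem_minBasis.2 ⟨mem_Ico.2 ⟨by omega, by omega⟩,
      fun h => hmspan (span_mono (Set.image_mono (coe_subset.2 (Ico_subset_Ico_left htj))) h)⟩
    rw [hR.dotProduct_of_mem_minBasis hper hrank hn hmj, if_neg (by omega)]
  have hsum := card_add_card_le_of_dotProduct_eq_zero
    (hJind.mono (coe_subset.2 (filter_subset _ _)))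
    (linearIndepOn_minBasis.mono (coe_subset.2 (filter_subset _ _))) horth
  have hsplit := card_filter_add_card_filter_not (s := minBasis n A t) (· ≤ a)
  simp only [not_le] at hsplit
  rw [hper.card_minBasis hrank hn, card_filter_le_minBasis (by omega),
    ← card_filter_ge_maxBasis ht] at hsplit
  rw [Fintype.card_fin] at hsum
  omega

theorem IsRightTwist.isMaxBasis_maxBasis (hR : IsRightTwist k n A R)
    (hper : ColPeriodic k n A) (hrank : FullRank k A) (hn : 0 < n) (a : ℤ) :
    IsMaxBasis k n R a (maxBasis n A a) := by
  have hcard := hper.card_maxBasis hrank hn a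
  refine ⟨fun i hi => (mem_maxBasis.1 hi).1,
    isColBasis_of_linearIndepOn (hR.linearIndepOn_maxBasis hper hrank hn a) hcard,
    fun J hJ hJb => ⟨hJb.1.trans hcard.symm, fun t => ?_⟩⟩
  rcases le_or_gt t (a - n) with ht | ht
  · have hfull : {i ∈ maxBasis n A a | t ≤ i} = maxBasis n A a :=
      filter_true_of_mem fun i hi => by
        have := mem_Ioc.1 (mem_maxBasis.1 hi).1
        omega
    rw [hfull, hcard, ← hJb.1]
    exact card_filter_le _ _
  · exact hR.card_filter_ge_le_card_filter_maxBasis hper hrank hn ht hJ hJb.2.1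

theorem IsRightTwist.eq_of_isLeftTwist {LR : ℤ → Fin k → ℂ} (hR : IsRightTwist k n A R)
    (hper : ColPeriodic k n A) (hrank : FullRank k A) (hn : 0 < n) (hLR : IsLeftTwist k n R LR) :
    LR = A := by
  funext a
  have hmax := hR.isMaxBasis_maxBasis hper hrank hn a
  refine eq_of_dotProduct_eq_of_span_eq_top hmax.2.1.2.2 fun b hb => ?_
  rw [← bil_eq_dotProduct, hLR a _ hmax b hb, dotProduct_comm]
  obtain ⟨hbw, hbspan⟩ := mem_maxBasis.1 hb
  rw [mem_Ioc] at hbw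
  rcases hbw.2.eq_or_lt with rfl | hba
  · rw [if_pos rfl, hR.dotProduct_self hper hrank hn fun h => hbspan (h ▸ zero_mem _)]
  · rw [if_neg hba.ne, hR.dotProduct_eq_zero hper hrank hn hba (by omega) hbspan]

end Twists

/-- the left and right twists are mutually inverse: for
every `k×n` complex matrix `A` of rank `k`, `τ→(τ←(A)) = A` and
`τ←(τ→(A)) = A`. -/
theorem twists_mutually_inverse
    (k n : ℕ) (hk : 1 ≤ k) (hkn : k ≤ n)
    (A : ℤ → Fin k → ℂ) (hper : ColPeriodic k n A) (hrank : FullRank k A)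
    (L RL R LR : ℤ → Fin k → ℂ)
    (hL : IsLeftTwist k n A L) (hRL : IsRightTwist k n L RL)
    (hR : IsRightTwist k n A R) (hLR : IsLeftTwist k n R LR) :
    RL = A ∧ LR = A := by
  have hn : 0 < n := Nat.lt_of_lt_of_le hk hkn
  refine ⟨?_, hR.eq_of_isLeftTwist hper hrank hn hLR⟩
  have hL' : IsRightTwist k n (fun b => A (-b)) (fun b => L (-b)) := isRightTwist_comp_neg_iff.2 hL
  have hRL' : IsLeftTwist k n (fun b => L (-b)) (fun b => RL (-b)) :=
    isRightTwist_comp_neg_iff.1 (by simpa using hRL)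
  funext a
  simpa using congrFun (hL'.eq_of_isLeftTwist hper.comp_neg hrank.comp_neg hn hRL') (-a)
end
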